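/- Let (u^{(k)})_{k≥0} be the canonical Markov chain on U with transition kernel p (the independence-sampler kernel) and initial distribution ρ. Then there exists a constant C > 0 depending only on Φ⋆ such that for every bounded measurable g : U → ℝ and every M ∈ ℕ, ( E[ | ∫_U g dπ − (1/M) ∑_{k=1}^M g(u^{(k)}) |² ] )^{1/2} ≤ C (sup_{u∈U} |g(u)|) M^{−1/2}, where E denotes expectation with respect to the law of the chain. -/

import Mathlib

/-!
Since `Φ ≥ 0`, the acceptance probability `α(u, v) = min 1 (exp (Φ u - Φ v))` dominates
`exp (-Φ v)`, so every row `p(u, ·)` of the kernel dominates `Z • π` with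
`Z = ∫ exp (-Φ) dρ ≥ exp (-Φ⋆)` (a Doeblin condition). Hence the Markov operator `P`
contracts the sup norm of `π`-centred functions by the factor `1 - Z`, and detailed balance
makes `π` invariant, so `|Pⁿ ḡ| ≤ (1 - Z)ⁿ sup |ḡ|` for `ḡ = g - π g`. By the Markov property,
`E[ḡ(u_j) ḡ(u_{j+n})] = E[ḡ(u_j) (Pⁿ ḡ)(u_j)]`, so the covariances decay geometrically in
`|j - k|`, and summing them gives `E (∑ ḡ(u_k))² ≤ M (2 / Z) (2 sup |g|)²`, i.e. the bound
with `C = √(8 exp Φ⋆)`.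
-/

open MeasureTheory

universe u

/-- The independence-sampler Metropolis–Hastings transition kernel
`p(u,A) = ∫_A α(u,v) dρ(v) + (1 - ∫_U α(u,v) dρ(v)) 1_A(u)` with acceptance
probability `α(u,v) = min(1, exp(Φ(u) - Φ(v)))` and proposal distribution `ρ`. -/
noncomputable def indepKernel {U : Type*} [MeasurableSpace U]
    (ρ : Measure U) (Φ : U → ℝ) (u : U) (A : Set U) : ℝ :=
  (∫ v in A, min 1 (Real.exp (Φ u - Φ v)) ∂ρ)
    + (1 - ∫ v, min 1 (Real.exp (Φ u - Φ v)) ∂ρ) *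
      A.indicator (fun _ => (1 : ℝ)) u

/-- The posterior measure `π` with density `exp(-Φ)/Z`, `Z = ∫ exp(-Φ) dρ`,
with respect to the prior `ρ`. -/
noncomputable def posterior {U : Type*} [MeasurableSpace U]
    (ρ : Measure U) (Φ : U → ℝ) : Measure U :=
  ρ.withDensity fun u =>
    ENNReal.ofReal (Real.exp (-Φ u) / ∫ v, Real.exp (-Φ v) ∂ρ)

open Real
open scoped ENNReal

lemma abs_integral_mul_le_integral_mul {α : Type*} [MeasurableSpace α] {μ : Measure α}
    {w f : α → ℝ} (hw : Integrable w μ) (hw0 : ∀ x, 0 ≤ w x) {c : ℝ} (hfc : ∀ x, |f x| ≤ c) :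
    |∫ x, w x * f x ∂μ| ≤ (∫ x, w x ∂μ) * c := by
  rw [← integral_mul_const c w, ← Real.norm_eq_abs]
  refine norm_integral_le_of_norm_le (hw.mul_const c) (.of_forall fun x => ?_)
  rw [norm_mul, Real.norm_of_nonneg (hw0 x)]
  exact mul_le_mul_of_nonneg_left (hfc x) (hw0 x)

lemma integral_sq_sub_average_eq {Ω : Type*} {mΩ : MeasurableSpace Ω} (P : Measure Ω) (a : ℝ)
    (Y : ℕ → Ω → ℝ) {M : ℕ} (hM : 1 ≤ M) :
    ∫ ω, (a - (1 / (M : ℝ)) * ∑ k ∈ Finset.Icc 1 M, Y k ω) ^ 2 ∂P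
      = ((M : ℝ) ^ 2)⁻¹ * ∫ ω, (∑ k ∈ Finset.Icc 1 M, (Y k ω - a)) ^ 2 ∂P := by
  rw [← integral_const_mul]
  congr 1 with ω
  have : (M : ℝ) ≠ 0 := by positivity
  rw [Finset.sum_sub_distrib, Finset.sum_const, Nat.card_Icc, Nat.add_sub_cancel, nsmul_eq_mul]
  field_simp
  ring

lemma sqrt_integral_sq_sub_average_le {Ω : Type*} {mΩ : MeasurableSpace Ω} (P : Measure Ω)
    (a : ℝ) (Y : ℕ → Ω → ℝ) {M : ℕ} (hM : 1 ≤ M) {V : ℝ}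
    (hV : ∫ ω, (∑ k ∈ Finset.Icc 1 M, (Y k ω - a)) ^ 2 ∂P ≤ M * V) :
    √(∫ ω, (a - (1 / (M : ℝ)) * ∑ k ∈ Finset.Icc 1 M, Y k ω) ^ 2 ∂P)
      ≤ √V * (M : ℝ) ^ (-(1 / 2) : ℝ) := by
  have hM0 : (0 : ℝ) < M := by exact_mod_cast hM
  rw [integral_sq_sub_average_eq P a Y hM, Real.rpow_neg hM0.le, ← Real.sqrt_eq_rpow,
    ← Real.sqrt_inv, ← Real.sqrt_mul' _ (inv_nonneg.2 hM0.le)]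
  refine Real.sqrt_le_sqrt ?_
  calc ((M : ℝ) ^ 2)⁻¹ * ∫ ω, (∑ k ∈ Finset.Icc 1 M, (Y k ω - a)) ^ 2 ∂P
      ≤ ((M : ℝ) ^ 2)⁻¹ * (M * V) := by gcongr
    _ = V * (M : ℝ)⁻¹ := by field_simp

lemma sum_pow_dist_le {r : ℝ} (hr0 : 0 ≤ r) (hr1 : r < 1) (j : ℕ) (s : Finset ℕ) :
    ∑ k ∈ s, r ^ Nat.dist j k ≤ 2 / (1 - r) := by
  have geom (t : Finset ℕ) (e : ℕ → ℕ) (he : Set.InjOn e t) :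
      ∑ k ∈ t, r ^ e k ≤ 1 / (1 - r) := by
    rw [← Finset.sum_image he, one_div, ← tsum_geometric_of_lt_one hr0 hr1]
    exact (summable_geometric_of_lt_one hr0 hr1).sum_le_tsum _ fun i _ => pow_nonneg hr0 i
  rw [← Finset.sum_filter_add_sum_filter_not s (· ≤ j),
    show 2 / (1 - r) = 1 / (1 - r) + 1 / (1 - r) by ring]
  refine add_le_add ?_ ?_
  · rw [Finset.sum_congr rfl fun k hk => by
      rw [Nat.dist_eq_sub_of_le_right (Finset.mem_filter.1 hk).2]]
    exact geom _ (j - ·) fun a ha b hb (hab : j - a = j - b) => by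
      simp only [Finset.coe_filter, Set.mem_ofPred_eq] at ha hb; omega
  · rw [Finset.sum_congr rfl fun k hk => by
      rw [Nat.dist_eq_sub_of_le (not_le.1 (Finset.mem_filter.1 hk).2).le]]
    exact geom _ (· - j) fun a ha b hb (hab : a - j = b - j) => by
      simp only [Finset.coe_filter, Set.mem_ofPred_eq] at ha hb; omega

lemma integral_sq_sum_le_of_abs_integral_mul_le {Ω : Type*} {mΩ : MeasurableSpace Ω}
    {P : Measure Ω} {Y : ℕ → Ω → ℝ}
    (hY : ∀ j k, Integrable (fun ω => Y j ω * Y k ω) P) {r c : ℝ} (hr0 : 0 ≤ r) (hr1 : r < 1)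
    (hcov : ∀ j k, |∫ ω, Y j ω * Y k ω ∂P| ≤ r ^ Nat.dist j k * c) (s : Finset ℕ) :
    ∫ ω, (∑ k ∈ s, Y k ω) ^ 2 ∂P ≤ s.card * (2 / (1 - r) * c) := by
  have hc : 0 ≤ c := by simpa using (abs_nonneg _).trans (hcov 0 0)
  simp_rw [sq, Finset.sum_mul_sum]
  rw [integral_finsetSum _ fun j _ => integrable_finsetSum _ fun k _ => hY j k]
  refine (Finset.sum_le_sum fun j _ => ?_).trans_eq (by rw [Finset.sum_const, nsmul_eq_mul])
  rw [integral_finsetSum _ fun k _ => hY j k]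
  calc ∑ k ∈ s, ∫ ω, Y j ω * Y k ω ∂P ≤ ∑ k ∈ s, r ^ Nat.dist j k * c :=
        Finset.sum_le_sum fun k _ => (le_abs_self _).trans (hcov j k)
    _ ≤ 2 / (1 - r) * c := by
        rw [← Finset.sum_mul]
        exact mul_le_mul_of_nonneg_right (sum_pow_dist_le hr0 hr1 j s) hc

noncomputable section MarkovChain

open ProbabilityTheory

variable {U V Ω : Type*} [MeasurableSpace U] [MeasurableSpace V] {mΩ : MeasurableSpace Ω}

lemma setIntegral_comp_eq_setIntegral_integral_kernel {P : Measure Ω} [IsFiniteMeasure P]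
    {κ : Kernel U V} [IsFiniteKernel κ] {Y : Ω → U} {Y' : Ω → V}
    (hY : Measurable Y) (hY' : Measurable Y') {B : Set Ω}
    (hlaw : ∀ A, MeasurableSet A → P (B ∩ Y' ⁻¹' A) = ∫⁻ ω in B, κ (Y ω) A ∂P)
    {f : V → ℝ} (hf : Measurable f) {c : ℝ} (hfc : ∀ v, |f v| ≤ c) :
    ∫ ω in B, f (Y' ω) ∂P = ∫ ω in B, ∫ v, f v ∂κ (Y ω) ∂P := by
  have hmap : (P.restrict B).map Y' = κ ∘ₘ (P.restrict B).map Y := by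
    ext A hA
    rw [Measure.map_apply hY' hA, Measure.restrict_apply (hY' hA), Set.inter_comm, hlaw A hA,
      Measure.bind_apply hA κ.aemeasurable, lintegral_map (κ.measurable_coe hA) hY]
  rw [← integral_map hY'.aemeasurable hf.aestronglyMeasurable, hmap,
    Measure.comp_eq_comp_const_apply, Kernel.integral_comp, Kernel.const_apply,
    integral_map hY.aemeasurable hf.stronglyMeasurable.integral_kernel.aestronglyMeasurable]
  exact .of_bound hf.aestronglyMeasurable c (.of_forall hfc)

abbrev pastSigma (X : ℕ → Ω → U) (k : ℕ) : MeasurableSpace Ω :=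
  ⨆ i ∈ Finset.range (k + 1), MeasurableSpace.comap (X i) inferInstance

def IsMarkovChain (κ : Kernel U U) (P : Measure Ω) (X : ℕ → Ω → U) : Prop :=
  ∀ k (A : Set U), MeasurableSet A → ∀ B, MeasurableSet[pastSigma X k] B →
    P (B ∩ X (k + 1) ⁻¹' A) = ∫⁻ ω in B, κ (X k ω) A ∂P

variable {X : ℕ → Ω → U}

lemma pastSigma_le (hX : ∀ k, Measurable (X k)) (k : ℕ) : pastSigma X k ≤ mΩ :=
  iSup₂_le fun i _ => (hX i).comap_le

lemma measurable_pastSigma {i k : ℕ} (hik : i ≤ k) : Measurable[pastSigma X k] (X i) :=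
  measurable_iff_comap_le.2 <| le_iSup₂ (f := fun j (_ : j ∈ Finset.range (k + 1)) =>
    MeasurableSpace.comap (X j) inferInstance) i (Finset.mem_range_succ_iff.2 hik)

def markovOp (κ : Kernel U U) (f : U → ℝ) (u : U) : ℝ := ∫ v, f v ∂κ u

variable {κ : Kernel U U}

lemma measurable_markovOp {f : U → ℝ} (hf : Measurable f) : Measurable (markovOp κ f) :=
  hf.stronglyMeasurable.integral_kernel.measurable

lemma abs_markovOp_le [IsMarkovKernel κ] {f : U → ℝ} {c : ℝ} (hfc : ∀ v, |f v| ≤ c) (u : U) :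
    |markovOp κ f u| ≤ c := by
  simpa [markovOp] using
    norm_integral_le_of_norm_le_const (μ := κ u) (f := f) (.of_forall hfc)

variable {P : Measure Ω}

lemma IsMarkovChain.markovOp_comp_ae_eq_condExp [IsFiniteMeasure P] [IsMarkovKernel κ]
    (hchain : IsMarkovChain κ P X) (hX : ∀ k, Measurable (X k)) {f : U → ℝ} (hf : Measurable f)
    {c : ℝ} (hfc : ∀ v, |f v| ≤ c) (k : ℕ) :
    (fun ω => markovOp κ f (X k ω)) =ᵐ[P] P[fun ω => f (X (k + 1) ω) | pastSigma X k] := by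
  have hm := pastSigma_le hX k
  refine ae_eq_condExp_of_forall_setIntegral_eq hm
    (.of_bound (hf.comp (hX _)).aestronglyMeasurable c (.of_forall fun ω => hfc _))
    (fun B _ _ => ?_) (fun B hB _ => ?_)
    ((measurable_markovOp hf).comp (measurable_pastSigma le_rfl)).aestronglyMeasurable
  · exact (Integrable.of_bound ((measurable_markovOp hf).comp (hX k)).aestronglyMeasurable c
      (.of_forall fun ω => abs_markovOp_le hfc _)).integrableOn
  · exact (setIntegral_comp_eq_setIntegral_integral_kernel (hX k) (hX (k + 1))
      (fun A hA => hchain k A hA B hB) hf hfc).symm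

lemma IsMarkovChain.integral_mul_comp_succ [IsFiniteMeasure P] [IsMarkovKernel κ]
    (hchain : IsMarkovChain κ P X) (hX : ∀ k, Measurable (X k)) {h f : U → ℝ} (hh : Measurable h)
    (hf : Measurable f) {a c : ℝ} (hha : ∀ u, |h u| ≤ a) (hfc : ∀ v, |f v| ≤ c) {j k : ℕ}
    (hjk : j ≤ k) :
    ∫ ω, h (X j ω) * f (X (k + 1) ω) ∂P = ∫ ω, h (X j ω) * markovOp κ f (X k ω) ∂P := by
  have hm := pastSigma_le hX k
  have hint : Integrable (fun ω => f (X (k + 1) ω)) P :=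
    .of_bound (hf.comp (hX _)).aestronglyMeasurable c (.of_forall fun ω => hfc _)
  have hhX : StronglyMeasurable[pastSigma X k] (fun ω => h (X j ω)) :=
    (hh.comp (measurable_pastSigma hjk)).stronglyMeasurable
  calc ∫ ω, h (X j ω) * f (X (k + 1) ω) ∂P
      = ∫ ω, P[(fun ω => h (X j ω)) * fun ω => f (X (k + 1) ω) | pastSigma X k] ω ∂P :=
        (integral_condExp hm).symm
    _ = ∫ ω, h (X j ω) * P[fun ω => f (X (k + 1) ω) | pastSigma X k] ω ∂P :=
        integral_congr_ae <| condExp_mul_of_stronglyMeasurable_left hhX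
          (hint.bdd_mul (hh.comp (hX j)).aestronglyMeasurable (.of_forall fun ω => hha _)) hint
    _ = ∫ ω, h (X j ω) * markovOp κ f (X k ω) ∂P := by
        refine integral_congr_ae ?_
        filter_upwards [hchain.markovOp_comp_ae_eq_condExp hX hf hfc k] with ω hω
        rw [hω]

lemma IsMarkovChain.integral_mul_comp_add [IsFiniteMeasure P] [IsMarkovKernel κ]
    (hchain : IsMarkovChain κ P X) (hX : ∀ k, Measurable (X k)) {h f : U → ℝ} (hh : Measurable h)
    (hf : Measurable f) {a c : ℝ} (hha : ∀ u, |h u| ≤ a) (hfc : ∀ v, |f v| ≤ c) (j n : ℕ) :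
    ∫ ω, h (X j ω) * f (X (j + n) ω) ∂P = ∫ ω, h (X j ω) * (markovOp κ)^[n] f (X j ω) ∂P := by
  induction n generalizing f with
  | zero => rfl
  | succ n ih =>
    rw [← add_assoc, hchain.integral_mul_comp_succ hX hh hf hha hfc (Nat.le_add_right j n),
      ih (measurable_markovOp hf) (abs_markovOp_le hfc), ← Function.iterate_succ_apply]

lemma IsMarkovChain.integral_sq_sum_le [IsProbabilityMeasure P] [IsMarkovKernel κ]
    (hchain : IsMarkovChain κ P X) (hX : ∀ k, Measurable (X k)) {f : U → ℝ} (hf : Measurable f)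
    {r c : ℝ} (hr0 : 0 ≤ r) (hr1 : r < 1) (hdecay : ∀ n u, |(markovOp κ)^[n] f u| ≤ r ^ n * c)
    (s : Finset ℕ) :
    ∫ ω, (∑ k ∈ s, f (X k ω)) ^ 2 ∂P ≤ s.card * (2 / (1 - r) * c ^ 2) := by
  have hfc : ∀ u, |f u| ≤ c := by simpa using hdecay 0
  have hbound : ∀ n j k ω, |f (X j ω) * (markovOp κ)^[n] f (X k ω)| ≤ c * (r ^ n * c) :=
    fun n j k ω => by
      rw [abs_mul]
      exact mul_le_mul (hfc _) (hdecay n _) (abs_nonneg _)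
        ((abs_nonneg (f (X j ω))).trans (hfc _))
  refine integral_sq_sum_le_of_abs_integral_mul_le (fun j k => ?_) hr0 hr1 (fun j k => ?_) s
  · exact .of_bound ((hf.comp (hX j)).mul (hf.comp (hX k))).aestronglyMeasurable _
      (.of_forall fun ω => by simpa using hbound 0 j k ω)
  wlog hjk : j ≤ k generalizing j k
  · simpa only [mul_comm, Nat.dist_comm] using this k j (le_of_not_ge hjk)
  obtain ⟨n, rfl⟩ := Nat.exists_eq_add_of_le hjk
  rw [hchain.integral_mul_comp_add hX hf hf hfc hfc, Nat.dist_eq_sub_of_le hjk,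
    Nat.add_sub_cancel_left]
  calc |∫ ω, f (X j ω) * (markovOp κ)^[n] f (X j ω) ∂P| ≤ c * (r ^ n * c) := by
        simpa using norm_integral_le_of_norm_le_const (μ := P)
          (f := fun ω => f (X j ω) * (markovOp κ)^[n] f (X j ω)) (.of_forall (hbound n j j))
    _ = r ^ n * c ^ 2 := by ring

end MarkovChain

noncomputable section MHKernel

open ProbabilityTheory

variable {U : Type*}

def acceptance (Φ : U → ℝ) (u v : U) : ℝ := min 1 (exp (Φ u - Φ v))

lemma acceptance_nonneg (Φ : U → ℝ) (u v : U) : 0 ≤ acceptance Φ u v :=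
  le_min zero_le_one (exp_pos _).le

lemma acceptance_le_one (Φ : U → ℝ) (u v : U) : acceptance Φ u v ≤ 1 := min_le_left _ _

lemma exp_neg_mul_acceptance_comm (Φ : U → ℝ) (u v : U) :
    exp (-Φ u) * acceptance Φ u v = exp (-Φ v) * acceptance Φ v u := by
  simp only [acceptance, mul_min_of_nonneg _ _ (exp_pos _).le, mul_one, ← exp_add]
  rw [min_comm]; ring_nf

lemma exp_neg_le_acceptance {Φ : U → ℝ} (hΦ : ∀ u, 0 ≤ Φ u) (u v : U) :
    exp (-Φ v) ≤ acceptance Φ u v :=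
  le_min (exp_le_one_iff.2 (by linarith [hΦ v])) (exp_le_exp.2 (by linarith [hΦ u]))

lemma abs_exp_neg_le_one {Φ : U → ℝ} (hΦ : ∀ u, 0 ≤ Φ u) (u : U) : |exp (-Φ u)| ≤ 1 := by
  rw [abs_of_pos (exp_pos _)]; exact exp_le_one_iff.2 (by linarith [hΦ u])

variable [MeasurableSpace U]

def rejection (ρ : Measure U) (Φ : U → ℝ) (u : U) : ℝ := 1 - ∫ v, acceptance Φ u v ∂ρ

/-- `p(u, ·) = α(u, ·) • ρ + (1 - ∫ α(u, ·) dρ) • δᵤ`, i.e. `indepKernel ρ Φ` as a kernel (see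
`mhKernel_real_apply`). `Kernel.withDensity` returns `0` for a non-measurable density, so this is a
Markov kernel only for measurable `Φ`. -/
def mhKernel (ρ : Measure U) [SFinite ρ] (Φ : U → ℝ) : Kernel U U :=
  Kernel.withDensity (Kernel.const U ρ) (fun u v => (acceptance Φ u v).toNNReal)
    + Kernel.withDensity Kernel.id (fun u _ => (rejection ρ Φ u).toNNReal)

variable {Φ : U → ℝ}

lemma measurable_acceptance (hΦ : Measurable Φ) :
    Measurable (Function.uncurry (acceptance Φ)) := by
  unfold acceptance Function.uncurry; fun_prop

variable {ρ : Measure U}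

lemma rejection_le_one (u : U) : rejection ρ Φ u ≤ 1 := by
  have := integral_nonneg (μ := ρ) (f := acceptance Φ u) fun v => acceptance_nonneg Φ u v
  unfold rejection; linarith

variable [IsProbabilityMeasure ρ]

lemma integrable_acceptance (hΦ : Measurable Φ) (u : U) : Integrable (acceptance Φ u) ρ :=
  .of_bound (measurable_acceptance hΦ).of_uncurry_left.aestronglyMeasurable 1
    (.of_forall fun v => by
      rw [Real.norm_of_nonneg (acceptance_nonneg Φ u v)]; exact acceptance_le_one Φ u v)

lemma rejection_nonneg (hΦ : Measurable Φ) (u : U) : 0 ≤ rejection ρ Φ u := by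
  have : ∫ v, acceptance Φ u v ∂ρ ≤ 1 := by
    simpa using integral_mono (integrable_acceptance (ρ := ρ) hΦ u) (integrable_const 1)
      fun v => acceptance_le_one Φ u v
  unfold rejection; linarith

lemma measurable_rejection (hΦ : Measurable Φ) : Measurable (rejection ρ Φ) :=
  measurable_const.sub
    (measurable_acceptance hΦ).stronglyMeasurable.integral_prod_right'.measurable

instance : IsFiniteKernel (mhKernel ρ Φ) := by
  have := Kernel.isFiniteKernel_withDensity_of_bounded (Kernel.const U ρ) ENNReal.one_ne_top
    (f := fun u v => ((acceptance Φ u v).toNNReal : ℝ≥0∞))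
    fun u v => by simpa using acceptance_le_one Φ u v
  have := Kernel.isFiniteKernel_withDensity_of_bounded Kernel.id ENNReal.one_ne_top
    (f := fun u (_ : U) => ((rejection ρ Φ u).toNNReal : ℝ≥0∞))
    fun u v => by simpa using rejection_le_one u
  unfold mhKernel; infer_instance

lemma integral_mhKernel (hΦ : Measurable Φ) {f : U → ℝ} (hf : Measurable f) {c : ℝ}
    (hfc : ∀ v, |f v| ≤ c) (u : U) :
    ∫ v, f v ∂mhKernel ρ Φ u
      = ∫ v, acceptance Φ u v * f v ∂ρ + rejection ρ Φ u * f u := by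
  have hint : Integrable f (mhKernel ρ Φ u) :=
    .of_bound hf.aestronglyMeasurable c (.of_forall hfc)
  rw [mhKernel, add_apply] at hint ⊢
  obtain ⟨hint₁, hint₂⟩ := integrable_add_measure.1 hint
  rw [integral_add_measure hint₁ hint₂, Kernel.integral_withDensity, Kernel.integral_withDensity,
    Kernel.const_apply, Kernel.id_apply]
  · simp only [NNReal.smul_def, Real.coe_toNNReal _ (acceptance_nonneg _ _ _),
      Real.coe_toNNReal _ (rejection_nonneg hΦ u), smul_eq_mul]
    rw [integral_const_mul, integral_dirac' _ _ hf.stronglyMeasurable]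
  · exact (measurable_rejection hΦ).comp measurable_fst |>.real_toNNReal
  · exact (measurable_acceptance hΦ).real_toNNReal

lemma isMarkovKernel_mhKernel (hΦ : Measurable Φ) : IsMarkovKernel (mhKernel ρ Φ) := by
  refine ⟨fun u => ⟨?_⟩⟩
  have h := integral_mhKernel (ρ := ρ) hΦ (f := fun _ => 1) measurable_const (c := 1)
    (by simp) u
  rw [integral_const, smul_eq_mul, mul_one, measureReal_def, rejection] at h
  simp only [mul_one, add_sub_cancel] at h
  exact (ENNReal.toReal_eq_one_iff _).1 h

lemma mhKernel_real_apply (hΦ : Measurable Φ) (u : U) {A : Set U} (hA : MeasurableSet A) :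
    (mhKernel ρ Φ u).real A = indepKernel ρ Φ u A := by
  rw [← integral_indicator_one hA, integral_mhKernel hΦ (measurable_one.indicator hA) (c := 1)
    (fun v => by by_cases hv : v ∈ A <;> simp [hv]), indepKernel, ← integral_indicator hA]
  simp only [Set.indicator, Pi.one_apply, mul_ite, mul_one, mul_zero, rejection, acceptance]

end MHKernel

noncomputable section Metropolis

variable {U : Type*} [MeasurableSpace U] {ρ : Measure U} {Φ : U → ℝ}

lemma integral_posterior (hΦ : Measurable Φ) (g : U → ℝ) :
    ∫ u, g u ∂posterior ρ Φ = (∫ u, exp (-Φ u) * g u ∂ρ) / ∫ u, exp (-Φ u) ∂ρ := by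
  have hZ : 0 ≤ ∫ u, exp (-Φ u) ∂ρ := integral_nonneg fun u => (exp_pos _).le
  rw [posterior, integral_withDensity_eq_integral_toReal_smul (by fun_prop)
    (.of_forall fun _ => ENNReal.ofReal_lt_top), ← integral_div]
  congr 1 with u
  rw [ENNReal.toReal_ofReal (div_nonneg (exp_pos _).le hZ), smul_eq_mul]
  ring

variable [IsProbabilityMeasure ρ]

lemma integrable_exp_neg (hΦ : Measurable Φ) (hΦ0 : ∀ u, 0 ≤ Φ u) :
    Integrable (fun v => exp (-Φ v)) ρ :=
  .of_bound (by fun_prop) 1 (.of_forall fun v => by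
    rw [Real.norm_of_nonneg (exp_pos _).le]; exact exp_le_one_iff.2 (by linarith [hΦ0 v]))

lemma abs_markovOp_mhKernel_le (hΦ : Measurable Φ) (hΦ0 : ∀ u, 0 ≤ Φ u) {f : U → ℝ}
    (hf : Measurable f) {c : ℝ} (hfc : ∀ v, |f v| ≤ c)
    (hcent : ∫ v, exp (-Φ v) * f v ∂ρ = 0) (u : U) :
    |markovOp (mhKernel ρ Φ) f u| ≤ (1 - ∫ v, exp (-Φ v) ∂ρ) * c := by
  have hexp := integrable_exp_neg (ρ := ρ) hΦ hΦ0
  have hacc := integrable_acceptance (ρ := ρ) hΦ u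
  have hgap : ∫ v, acceptance Φ u v * f v ∂ρ = ∫ v, (acceptance Φ u v - exp (-Φ v)) * f v ∂ρ := by
    simp_rw [sub_mul]
    rw [integral_sub (hacc.mul_bdd hf.aestronglyMeasurable (.of_forall hfc))
      (hexp.mul_bdd hf.aestronglyMeasurable (.of_forall hfc)),
      hcent, sub_zero]
  have hmass : ∫ v, (acceptance Φ u v - exp (-Φ v)) ∂ρ
      = 1 - rejection ρ Φ u - ∫ v, exp (-Φ v) ∂ρ := by
    rw [integral_sub hacc hexp, rejection, sub_sub_cancel]
  have h₁ := abs_integral_mul_le_integral_mul (w := fun v => acceptance Φ u v - exp (-Φ v))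
    (hacc.sub hexp)
    (fun v => sub_nonneg.2 (exp_neg_le_acceptance hΦ0 u v)) hfc
  have h₂ : |rejection ρ Φ u * f u| ≤ rejection ρ Φ u * c := by
    rw [abs_mul, abs_of_nonneg (rejection_nonneg hΦ u)]
    exact mul_le_mul_of_nonneg_left (hfc u) (rejection_nonneg hΦ u)
  rw [markovOp, integral_mhKernel hΦ hf hfc, hgap]
  refine (abs_add_le _ _).trans ?_
  rw [hmass] at h₁
  linarith

lemma integral_exp_neg_mul_markovOp_mhKernel (hΦ : Measurable Φ) (hΦ0 : ∀ u, 0 ≤ Φ u)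
    {f : U → ℝ} (hf : Measurable f) {c : ℝ} (hfc : ∀ v, |f v| ≤ c) :
    ∫ u, exp (-Φ u) * markovOp (mhKernel ρ Φ) f u ∂ρ = ∫ u, exp (-Φ u) * f u ∂ρ := by
  have hexp := integrable_exp_neg (ρ := ρ) hΦ hΦ0
  have hfΦ := hexp.mul_bdd hf.aestronglyMeasurable (.of_forall hfc)
  have hprod : Integrable (fun p : U × U => exp (-Φ p.1) * acceptance Φ p.1 p.2 * f p.2)
      (ρ.prod ρ) := by
    refine .of_bound ?_ c (.of_forall fun p => ?_)
    · exact ((hΦ.comp measurable_fst).neg.exp.mul (measurable_acceptance hΦ)).mul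
        (hf.comp measurable_snd) |>.aestronglyMeasurable
    · rw [Real.norm_eq_abs, abs_mul, abs_mul, abs_of_nonneg (acceptance_nonneg Φ _ _)]
      exact (mul_le_of_le_one_left (abs_nonneg _) (mul_le_one₀ (abs_exp_neg_le_one hΦ0 _)
        (acceptance_nonneg Φ _ _) (acceptance_le_one Φ _ _))).trans (hfc _)
  have hbalance : ∫ u, exp (-Φ u) * ∫ v, acceptance Φ u v * f v ∂ρ ∂ρ
      = ∫ v, exp (-Φ v) * f v * (1 - rejection ρ Φ v) ∂ρ := by
    calc ∫ u, exp (-Φ u) * ∫ v, acceptance Φ u v * f v ∂ρ ∂ρ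
        = ∫ u, ∫ v, exp (-Φ u) * acceptance Φ u v * f v ∂ρ ∂ρ := by
          simp_rw [mul_assoc, integral_const_mul]
      _ = ∫ v, ∫ u, exp (-Φ u) * acceptance Φ u v * f v ∂ρ ∂ρ := integral_integral_swap hprod
      _ = ∫ v, ∫ u, exp (-Φ v) * f v * acceptance Φ v u ∂ρ ∂ρ := by
          simp_rw [exp_neg_mul_acceptance_comm Φ _ _, mul_right_comm]
      _ = ∫ v, exp (-Φ v) * f v * (1 - rejection ρ Φ v) ∂ρ := by
          simp_rw [integral_const_mul, rejection, sub_sub_cancel]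
  have hrej : Integrable (fun u => exp (-Φ u) * (rejection ρ Φ u * f u)) ρ := by
    refine hexp.mul_bdd (c := c) ((measurable_rejection hΦ).mul hf).aestronglyMeasurable
      (.of_forall fun u => ?_)
    rw [Real.norm_eq_abs, abs_mul, abs_of_nonneg (rejection_nonneg hΦ u)]
    exact (mul_le_of_le_one_left (abs_nonneg _) (rejection_le_one u)).trans (hfc u)
  have hacc : Integrable (fun u => exp (-Φ u) * ∫ v, acceptance Φ u v * f v ∂ρ) ρ := by
    refine hexp.mul_bdd (c := c) ((measurable_acceptance hΦ).mul (hf.comp measurable_snd)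
      |>.stronglyMeasurable.integral_prod_right').aestronglyMeasurable (.of_forall fun u => ?_)
    simpa using norm_integral_le_of_norm_le_const (μ := ρ)
      (f := fun v => acceptance Φ u v * f v) (.of_forall fun v => by
        rw [Real.norm_eq_abs, abs_mul, abs_of_nonneg (acceptance_nonneg Φ _ _)]
        exact (mul_le_of_le_one_left (abs_nonneg _) (acceptance_le_one Φ u v)).trans (hfc v))
  have hstay : Integrable (fun u => exp (-Φ u) * f u * (1 - rejection ρ Φ u)) ρ := by
    refine hfΦ.mul_bdd (c := 1)
      (measurable_const.sub (measurable_rejection hΦ)).aestronglyMeasurable (.of_forall fun u => ?_)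
    rw [Real.norm_eq_abs, abs_le]
    constructor <;> linarith [rejection_nonneg (ρ := ρ) hΦ u, rejection_le_one (ρ := ρ) (Φ := Φ) u]
  simp_rw [markovOp, integral_mhKernel hΦ hf hfc, mul_add]
  rw [integral_add hacc hrej, hbalance, ← integral_add hstay hrej]
  congr 1 with u
  ring

lemma abs_markovOp_mhKernel_iterate_le (hΦ : Measurable Φ) (hΦ0 : ∀ u, 0 ≤ Φ u) {f : U → ℝ}
    (hf : Measurable f) {c : ℝ} (hfc : ∀ v, |f v| ≤ c)
    (hcent : ∫ v, exp (-Φ v) * f v ∂ρ = 0) (n : ℕ) (u : U) :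
    |(markovOp (mhKernel ρ Φ))^[n] f u| ≤ (1 - ∫ v, exp (-Φ v) ∂ρ) ^ n * c := by
  induction n generalizing f c with
  | zero => simpa using hfc u
  | succ n ih =>
    have := isMarkovKernel_mhKernel (ρ := ρ) hΦ
    rw [Function.iterate_succ_apply, pow_succ, mul_assoc]
    exact ih (measurable_markovOp hf) (abs_markovOp_mhKernel_le hΦ hΦ0 hf hfc hcent)
      ((integral_exp_neg_mul_markovOp_mhKernel hΦ hΦ0 hf hfc).trans hcent)

lemma integral_exp_neg_pos (hΦ : Measurable Φ) (hΦ0 : ∀ u, 0 ≤ Φ u) :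
    0 < ∫ v, exp (-Φ v) ∂ρ :=
  integral_exp_pos (integrable_exp_neg hΦ hΦ0)

lemma integral_exp_neg_le_one (hΦ : Measurable Φ) (hΦ0 : ∀ u, 0 ≤ Φ u) :
    ∫ v, exp (-Φ v) ∂ρ ≤ 1 := by
  simpa using integral_mono (integrable_exp_neg (ρ := ρ) hΦ hΦ0) (integrable_const 1)
    fun v => (le_abs_self _).trans (abs_exp_neg_le_one hΦ0 v)

lemma inv_integral_exp_neg_le (hΦ : Measurable Φ) (hΦ0 : ∀ u, 0 ≤ Φ u) {b : ℝ}
    (hb : ∀ u, Φ u ≤ b) : (∫ v, exp (-Φ v) ∂ρ)⁻¹ ≤ exp b := by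
  have : exp (-b) ≤ ∫ v, exp (-Φ v) ∂ρ := by
    simpa using integral_mono (integrable_const _) (integrable_exp_neg (ρ := ρ) hΦ hΦ0)
      fun v => exp_le_exp.2 (neg_le_neg (hb v))
  simpa [exp_neg] using inv_anti₀ (exp_pos _) this

lemma abs_integral_posterior_le (hΦ : Measurable Φ) (hΦ0 : ∀ u, 0 ≤ Φ u) {g : U → ℝ} {c : ℝ}
    (hgc : ∀ u, |g u| ≤ c) : |∫ u, g u ∂posterior ρ Φ| ≤ c := by
  have hZ := integral_exp_neg_pos (ρ := ρ) hΦ hΦ0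
  rw [integral_posterior hΦ, abs_div, abs_of_pos hZ, div_le_iff₀ hZ, mul_comm]
  exact abs_integral_mul_le_integral_mul (integrable_exp_neg hΦ hΦ0) (fun u => (exp_pos _).le) hgc

lemma integral_exp_neg_mul_sub_integral_posterior (hΦ : Measurable Φ) (hΦ0 : ∀ u, 0 ≤ Φ u)
    {g : U → ℝ} (hg : Measurable g) {c : ℝ} (hgc : ∀ u, |g u| ≤ c) :
    ∫ v, exp (-Φ v) * (g v - ∫ u, g u ∂posterior ρ Φ) ∂ρ = 0 := by
  have hexp := integrable_exp_neg (ρ := ρ) hΦ hΦ0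
  simp_rw [mul_sub]
  rw [integral_sub (hexp.mul_bdd hg.aestronglyMeasurable (.of_forall hgc)) (hexp.mul_const _),
    integral_mul_const, integral_posterior hΦ,
    mul_div_cancel₀ _ (integral_exp_neg_pos hΦ hΦ0).ne', sub_self]

lemma isMarkovChain_mhKernel {Ω : Type*} {mΩ : MeasurableSpace Ω} {P : Measure Ω}
    [IsFiniteMeasure P] {X : ℕ → Ω → U} (hΦ : Measurable Φ) (hX : ∀ k, Measurable (X k))
    (h : ∀ (k : ℕ) (A : Set U), MeasurableSet A → ∀ B, MeasurableSet[pastSigma X k] B →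
      (P (B ∩ X (k + 1) ⁻¹' A)).toReal = ∫ ω in B, indepKernel ρ Φ (X k ω) A ∂P) :
    IsMarkovChain (mhKernel ρ Φ) P X := by
  have := isMarkovKernel_mhKernel (ρ := ρ) hΦ
  intro k A hA B hB
  have hfin : ∫⁻ ω in B, mhKernel ρ Φ (X k ω) A ∂P ≠ ⊤ :=
    ((lintegral_mono fun _ => prob_le_one).trans_eq (setLIntegral_one B)).trans_lt
      (measure_lt_top P B) |>.ne
  rw [← ENNReal.toReal_eq_toReal_iff' (measure_ne_top _ _) hfin, h k A hA B hB,
    ← integral_toReal (f := fun ω => mhKernel ρ Φ (X k ω) A)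
      ((ProbabilityTheory.Kernel.measurable_coe _ hA).comp (hX k)).aemeasurable
      (.of_forall fun _ => measure_lt_top _ _)]
  simp_rw [← measureReal_def, mhKernel_real_apply hΦ _ hA]

end Metropolis

/-- The Markov chain `(u^{(k)})` is encoded by a process `X` on `(Ω, P)` with initial law `ρ`
satisfying the Markov property with respect to `p = indepKernel ρ Φ`; the canonical chain of the
Ionescu–Tulcea construction is such a process. -/
theorem stmt16_general
    {U : Type u} [MeasurableSpace U]
    (ρ : Measure U) [IsProbabilityMeasure ρ]
    (Φstar : ℝ)
    (Φ : U → ℝ) (hΦmeas : Measurable Φ)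
    (hΦ : ∀ u, 0 ≤ Φ u ∧ Φ u ≤ Φstar) :
    ∃ C > (0 : ℝ),
      ∀ (Ω : Type u) [MeasurableSpace Ω]
        (P : Measure Ω) [IsProbabilityMeasure P]
        (X : ℕ → Ω → U), (∀ k, Measurable (X k)) →
        P.map (X 0) = ρ →
        (∀ (k : ℕ) (A : Set U), MeasurableSet A →
          ∀ B : Set Ω,
            MeasurableSet[⨆ i ∈ Finset.range (k + 1),
              MeasurableSpace.comap (X i) inferInstance] B →
            (P (B ∩ X (k + 1) ⁻¹' A)).toReal
              = ∫ ω in B, indepKernel ρ Φ (X k ω) A ∂P) →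
        ∀ (g : U → ℝ), Measurable g →
        ∀ Bg : ℝ, (∀ u, |g u| ≤ Bg) →
        ∀ M : ℕ, 1 ≤ M →
          Real.sqrt (∫ ω,
              ((∫ u, g u ∂(posterior ρ Φ))
                - (1 / (M : ℝ)) * ∑ k ∈ Finset.Icc 1 M, g (X k ω)) ^ 2 ∂P)
            ≤ C * Bg * (M : ℝ) ^ (-(1 / 2) : ℝ) := by
  obtain ⟨hΦ0, hΦle⟩ := forall_and.1 hΦ
  have hZ0 := integral_exp_neg_pos (ρ := ρ) hΦmeas hΦ0
  have hZ1 := integral_exp_neg_le_one (ρ := ρ) hΦmeas hΦ0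
  have hZinv := inv_integral_exp_neg_le (ρ := ρ) hΦmeas hΦ0 hΦle
  have := isMarkovKernel_mhKernel (ρ := ρ) hΦmeas
  refine ⟨√(8 * exp Φstar), by positivity, ?_⟩
  intro Ω _ P _ X hX _ hMarkov g hg Bg hgB M hM
  set πg := ∫ u, g u ∂posterior ρ Φ
  have hBg : 0 ≤ Bg := (abs_nonneg _).trans (hgB (nonempty_of_isProbabilityMeasure ρ).some)
  have hgc : ∀ u, |g u - πg| ≤ 2 * Bg := fun u =>
    (abs_sub _ _).trans (by linarith [hgB u, abs_integral_posterior_le (ρ := ρ) hΦmeas hΦ0 hgB])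
  have hvar := (isMarkovChain_mhKernel hΦmeas hX hMarkov).integral_sq_sum_le hX
    (hg.sub_const πg) (sub_nonneg.2 hZ1) (sub_lt_self 1 hZ0)
    (abs_markovOp_mhKernel_iterate_le hΦmeas hΦ0 (hg.sub_const πg) hgc
      (integral_exp_neg_mul_sub_integral_posterior hΦmeas hΦ0 hg hgB)) (Finset.Icc 1 M)
  rw [Nat.card_Icc, Nat.add_sub_cancel, sub_sub_cancel] at hvar
  have hV : 2 / (∫ v, exp (-Φ v) ∂ρ) * (2 * Bg) ^ 2 ≤ (√(8 * exp Φstar) * Bg) ^ 2 := by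
    rw [mul_pow √(8 * exp Φstar), Real.sq_sqrt (by positivity)]
    calc 2 / (∫ v, exp (-Φ v) ∂ρ) * (2 * Bg) ^ 2 = 8 * (∫ v, exp (-Φ v) ∂ρ)⁻¹ * Bg ^ 2 := by ring
      _ ≤ 8 * exp Φstar * Bg ^ 2 := by gcongr
  refine (sqrt_integral_sq_sub_average_le P πg _ hM hvar).trans ?_
  gcongr
  exact (Real.sqrt_le_sqrt hV).trans_eq (Real.sqrt_sq (by positivity))

/-- root-mean-square error bound `C (sup|g|) M^{-1/2}` for the
ergodic averages of the independence sampler started in the prior `ρ`, with a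
constant `C` depending only on `Φ⋆`.  The Markov chain `(u^{(k)})` with
transition kernel `p = indepKernel ρ Φ` and initial distribution `ρ` is
encoded by a process `X` on a probability space `(Ω, P)` with initial law `ρ`
satisfying the Markov property with respect to `p`; the canonical chain of the
Ionescu–Tulcea construction is such a process. -/
theorem stmt16
    {U : Type u} [MeasurableSpace U]
    (ρ : Measure U) [IsProbabilityMeasure ρ]
    (Φstar : ℝ) (hΦstar : 0 ≤ Φstar)
    (Φ : U → ℝ) (hΦmeas : Measurable Φ)
    (hΦ : ∀ u, 0 ≤ Φ u ∧ Φ u ≤ Φstar) :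
    ∃ C > (0 : ℝ),
      ∀ (Ω : Type u) [MeasurableSpace Ω]
        (P : Measure Ω) [IsProbabilityMeasure P]
        (X : ℕ → Ω → U), (∀ k, Measurable (X k)) →
        P.map (X 0) = ρ →
        (∀ (k : ℕ) (A : Set U), MeasurableSet A →
          ∀ B : Set Ω,
            MeasurableSet[⨆ i ∈ Finset.range (k + 1),
              MeasurableSpace.comap (X i) inferInstance] B →
            (P (B ∩ X (k + 1) ⁻¹' A)).toReal
              = ∫ ω in B, indepKernel ρ Φ (X k ω) A ∂P) →
        ∀ (g : U → ℝ), Measurable g →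
        ∀ Bg : ℝ, (∀ u, |g u| ≤ Bg) →
        ∀ M : ℕ, 1 ≤ M →
          Real.sqrt (∫ ω,
              ((∫ u, g u ∂(posterior ρ Φ))
                - (1 / (M : ℝ)) * ∑ k ∈ Finset.Icc 1 M, g (X k ω)) ^ 2 ∂P)
            ≤ C * Bg * (M : ℝ) ^ (-(1 / 2) : ℝ) :=
  stmt16_general ρ Φstar Φ hΦmeas hΦ
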